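/- Let p be a prime and let φ: ℚ → ℚ be a bijection with φ(0) = 0 that is K₀-bilipschitz for both the real and the p-adic absolute values and quasicompatible with H. Then for every positive integer L coprime to p there exists s₀ > 0 such that: for every parallelogram (a,b,c,d) in (1/L)·ℤ[1/p] with b ≠ a, c ≠ a, per(P) ≤ L and shape(P) > s₀, the image is again a parallelogram, i.e. φ(a) − φ(c) = φ(b) − φ(d). -/

import Mathlib

/-- The subring `ℤ[1/p]` of `ℚ`, i.e. the smallest subring of `ℚ` containing `1/p`;
its elements are exactly the rationals of the form `a / p ^ k` with `a ∈ ℤ`, `k ∈ ℕ`. -/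
def ZOneOver (p : ℕ) : Subring ℚ := Subring.closure {((p : ℚ))⁻¹}

/-- The diagonal embedding of `ℚ` into `ℝ × ℚ_p`. -/
noncomputable def diagQ (p : ℕ) [Fact p.Prime] (x : ℚ) : ℝ × ℚ_[p] :=
  ((x : ℝ), (x : ℚ_[p]))

/-- Coordinatewise multiplication by `p^(2n)` on `ℝ × ℚ_p` (the generator of the
group `H`, acting `n` times). -/
noncomputable def scaleH (p : ℕ) [Fact p.Prime] (n : ℤ) (z : ℝ × ℚ_[p]) : ℝ × ℚ_[p] :=
  ((p : ℝ) ^ (2 * n) * z.1, (p : ℚ_[p]) ^ (2 * n) * z.2)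

/-- The `H`-invariant diameter `δ(S)`: the infimum over `n ∈ ℤ` of the diameter of
`p^(2n) · S`, where `ℝ × ℚ_p` carries the sup metric
`d((x₁,y₁),(x₂,y₂)) = max (|x₁−x₂|) (|y₁−y₂|_p)`. -/
noncomputable def deltaH (p : ℕ) [Fact p.Prime] (S : Set (ℝ × ℚ_[p])) : ℝ :=
  ⨅ n : ℤ, Metric.diam (scaleH p n '' S)

/-- A subset `S ⊆ ℚ` has bounded height if `S ⊆ (1/M)·ℤ[1/p]` for some positive
integer `M` coprime to `p`. -/
def BoundedHeight (p : ℕ) (S : Set ℚ) : Prop :=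
  ∃ M : ℕ, 0 < M ∧ Nat.Coprime M p ∧ ∀ x ∈ S, (M : ℚ) * x ∈ ZOneOver p

/-- A map `ψ` with domain `A ⊆ ℚ` is quasi-adapted to `δ` if there is `α : ℕ → ℕ` such
that for every finite `V ⊆ A` (viewed diagonally in `ℝ × ℚ_p`): `δ(V) ≤ k` implies
`δ(ψ(V)) ≤ α(k)` and `δ(ψ(V)) ≤ k` implies `δ(V) ≤ α(k)`. -/
def QuasiAdapted (p : ℕ) [Fact p.Prime] (ψ : ℚ → ℚ) (A : Set ℚ) : Prop :=
  ∃ α : ℕ → ℕ, ∀ V : Finset ℚ, ↑V ⊆ A → ∀ k : ℕ,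
    (deltaH p (diagQ p '' ↑V) ≤ (k : ℝ) → deltaH p (diagQ p '' (ψ '' ↑V)) ≤ (α k : ℝ)) ∧
    (deltaH p (diagQ p '' (ψ '' ↑V)) ≤ (k : ℝ) → deltaH p (diagQ p '' ↑V) ≤ (α k : ℝ))

/-- A bijection `φ : ℚ → ℚ` is quasicompatible with `H` if it is quasi-integral (`φ`
and `φ⁻¹` carry sets of bounded height to sets of bounded height) and the restrictions
of `φ` and `φ⁻¹` to every set of bounded height are quasi-adapted to `δ`. -/
def QuasiCompatible (p : ℕ) [Fact p.Prime] (φ : ℚ → ℚ) : Prop :=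
  (∀ A : Set ℚ, BoundedHeight p A → BoundedHeight p (φ '' A)) ∧
  (∀ A : Set ℚ, BoundedHeight p A → BoundedHeight p (φ ⁻¹' A)) ∧
  (∀ A : Set ℚ, BoundedHeight p A → QuasiAdapted p φ A) ∧
  (∀ A : Set ℚ, BoundedHeight p A → QuasiAdapted p (Function.invFun φ) A)

/-!
If `φ` did not preserve the parallelogram, its defect `e = (φ a - φ c) - (φ b - φ d)` would be
a nonzero element of `(1/M)·ℤ[1/p]` (quasi-integrality), hence `|e| · |e|_p ≥ 1/M`. But the real
Lipschitz bound controls `|e|` by the side `|a - c|`, the `p`-adic one controls `|e|_p` by the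
other side `|a - b|_p`, and `δ({a, c}) ≤ L` forces `|a - c| · |a - c|_p ≤ L²`. Hence
`|e| · |e|_p ≤ 4 K₀² L² · |a - b|_p / |a - c|_p`, which is below `1/M` once the shape is large.
-/

open Padic

lemma norm_sub_sub_sub_le_of_norm_sub_le {α E F : Type*} [SeminormedAddCommGroup E]
    [SeminormedAddCommGroup F] {f : α → E} {g : α → F} {K : ℝ}
    (hf : ∀ x y, ‖f x - f y‖ ≤ K * ‖g x - g y‖) {a b c d : α} (h : g a - g c = g b - g d) :
    ‖f a - f c - (f b - f d)‖ ≤ 2 * K * ‖g a - g c‖ :=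
  calc _ ≤ ‖f a - f c‖ + ‖f b - f d‖ := norm_sub_le _ _
    _ ≤ K * ‖g a - g c‖ + K * ‖g b - g d‖ := add_le_add (hf a c) (hf b d)
    _ = 2 * K * ‖g a - g c‖ := by rw [← h]; ring

section

variable {p : ℕ} [Fact p.Prime]

lemma exists_mul_pow_eq_intCast_of_mem_ZOneOver {x : ℚ} (hx : x ∈ ZOneOver p) :
    ∃ (k : ℕ) (m : ℤ), x * (p : ℚ) ^ k = m := by
  have hp : (p : ℚ) ≠ 0 := Nat.cast_ne_zero.mpr (Fact.out : p.Prime).ne_zero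
  induction hx using Subring.closure_induction with
  | mem x hx => exact ⟨1, 1, by rw [Set.mem_singleton_iff.mp hx]; simp [hp]⟩
  | zero => exact ⟨0, 0, by simp⟩
  | one => exact ⟨0, 1, by simp⟩
  | add x y _ _ hx hy =>
    obtain ⟨k, m, hm⟩ := hx
    obtain ⟨l, n, hn⟩ := hy
    exact ⟨k + l, m * p ^ l + n * p ^ k, by push_cast; rw [← hm, ← hn]; ring⟩
  | neg x _ hx =>
    obtain ⟨k, m, hm⟩ := hx
    exact ⟨k, -m, by push_cast; rw [← hm]; ring⟩
  | mul x y _ _ hx hy =>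
    obtain ⟨k, m, hm⟩ := hx
    obtain ⟨l, n, hn⟩ := hy
    exact ⟨k + l, m * n, by push_cast; rw [← hm, ← hn]; ring⟩

lemma norm_ratCast_eq_zpow {q : ℚ} (hq : q ≠ 0) :
    ‖(q : ℚ_[p])‖ = (p : ℝ) ^ (-padicValRat p q) := by
  rw [norm_eq_zpow_neg_valuation (Rat.cast_ne_zero.mpr hq), valuation_ratCast]

lemma one_le_abs_mul_norm_intCast {m : ℤ} (hm : m ≠ 0) : 1 ≤ |(m : ℝ)| * ‖(m : ℚ_[p])‖ := by
  have hp : (0 : ℝ) < p := Nat.cast_pos.mpr (Fact.out : p.Prime).pos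
  have hdvd : (p : ℤ) ^ padicValInt p m ≤ |m| :=
    Int.le_of_dvd (abs_pos.mpr hm) ((dvd_abs _ _).mpr (padicValInt_dvd m))
  rw [← Rat.cast_intCast (α := ℚ_[p]), norm_ratCast_eq_zpow (Int.cast_ne_zero.mpr hm),
    padicValRat.of_int]
  calc (1 : ℝ) = (p : ℝ) ^ (padicValInt p m : ℤ) * (p : ℝ) ^ (-(padicValInt p m : ℤ)) := by
        rw [← zpow_add₀ hp.ne', add_neg_cancel, zpow_zero]
    _ ≤ |(m : ℝ)| * (p : ℝ) ^ (-(padicValInt p m : ℤ)) := by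
        gcongr
        rw [zpow_natCast]
        exact_mod_cast hdvd

/-- A weak product formula on `(1/M)·ℤ[1/p]`. -/
lemma inv_le_abs_mul_norm_of_mul_mem_ZOneOver {M : ℕ} (hM : 0 < M) (hMp : M.Coprime p)
    {x : ℚ} (hx : x ≠ 0) (hmem : (M : ℚ) * x ∈ ZOneOver p) :
    (M : ℝ)⁻¹ ≤ |(x : ℝ)| * ‖(x : ℚ_[p])‖ := by
  have hp : (0 : ℝ) < p := Nat.cast_pos.mpr (Fact.out : p.Prime).pos
  obtain ⟨k, m, hkm⟩ := exists_mul_pow_eq_intCast_of_mem_ZOneOver hmem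
  have hm : m ≠ 0 := by
    rintro rfl
    simp [hM.ne', hx, (Fact.out : p.Prime).ne_zero] at hkm
  have hreal : |(m : ℝ)| = M * (p : ℝ) ^ k * |(x : ℝ)| := by
    rw [← Rat.cast_intCast, ← hkm]
    push_cast
    rw [abs_mul, abs_mul, Nat.abs_cast, abs_pow, Nat.abs_cast]
    ring
  have hpadic : ‖(m : ℚ_[p])‖ = (p : ℝ) ^ (-(k : ℤ)) * ‖(x : ℚ_[p])‖ := by
    rw [← Rat.cast_intCast, ← hkm]
    push_cast
    rw [norm_mul, norm_mul, norm_natCast_eq_one_iff.mpr hMp.symm, norm_p_pow]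
    ring
  have hpk : (p : ℝ) ^ k * (p : ℝ) ^ (-(k : ℤ)) = 1 := by
    rw [← zpow_natCast, ← zpow_add₀ hp.ne', add_neg_cancel, zpow_zero]
  rw [inv_le_iff_one_le_mul₀' (Nat.cast_pos.mpr hM)]
  calc 1 ≤ |(m : ℝ)| * ‖(m : ℚ_[p])‖ := one_le_abs_mul_norm_intCast hm
    _ = M * ((p : ℝ) ^ k * (p : ℝ) ^ (-(k : ℤ))) * (|(x : ℝ)| * ‖(x : ℚ_[p])‖) := by
        rw [hreal, hpadic]; ring
    _ = M * (|(x : ℝ)| * ‖(x : ℚ_[p])‖) := by rw [hpk, mul_one]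

lemma mul_norm_sub_lt_norm_sub_of_lt_zpow {a b c : ℚ} (hba : b ≠ a) (hca : c ≠ a) {C : ℝ}
    (hC : C < (p : ℝ) ^ (padicValRat p (b - a) - padicValRat p (c - a))) :
    C * ‖(a : ℚ_[p]) - b‖ < ‖(a : ℚ_[p]) - c‖ := by
  have hp : (0 : ℝ) < p := Nat.cast_pos.mpr (Fact.out : p.Prime).pos
  rw [norm_sub_rev, ← Rat.cast_sub, norm_ratCast_eq_zpow (sub_ne_zero.mpr hba), norm_sub_rev,
    ← Rat.cast_sub, norm_ratCast_eq_zpow (sub_ne_zero.mpr hca),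
    show -padicValRat p (c - a) = padicValRat p (b - a) - padicValRat p (c - a) +
      -padicValRat p (b - a) by ring, zpow_add₀ hp.ne']
  exact mul_lt_mul_of_pos_right hC (zpow_pos hp _)

lemma deltaH_nonneg (S : Set (ℝ × ℚ_[p])) : 0 ≤ deltaH p S :=
  Real.iInf_nonneg fun _ => Metric.diam_nonneg

lemma dist_scaleH_diagQ (n : ℤ) (x y : ℚ) :
    dist (scaleH p n (diagQ p x)) (scaleH p n (diagQ p y)) =
      max ((p : ℝ) ^ (2 * n) * |(x : ℝ) - y|) ((p : ℝ) ^ (-(2 * n)) * ‖(x : ℚ_[p]) - y‖) := by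
  simp only [scaleH, diagQ]
  rw [Prod.dist_eq, Real.dist_eq, dist_eq_norm, ← mul_sub, ← mul_sub, abs_mul, norm_mul,
    norm_p_zpow, abs_of_nonneg (by positivity)]

/-- The product `|x - y| · |x - y|_p` is invariant under `H`, which is why it is bounded by `δ²`. -/
lemma abs_sub_mul_norm_sub_le_deltaH_sq (x y : ℚ) :
    |(x : ℝ) - y| * ‖(x : ℚ_[p]) - y‖ ≤ deltaH p (diagQ p '' {x, y}) ^ 2 := by
  have hp : (0 : ℝ) < p := Nat.cast_pos.mpr (Fact.out : p.Prime).pos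
  set P := |(x : ℝ) - y| * ‖(x : ℚ_[p]) - y‖
  have hsqrt : √P ≤ deltaH p (diagQ p '' {x, y}) := by
    refine le_ciInf fun n => ?_
    rw [Set.image_pair, Set.image_pair, Metric.diam_pair, dist_scaleH_diagQ]
    refine Real.sqrt_le_iff.mpr ⟨le_max_of_le_left (by positivity), ?_⟩
    calc P = ((p : ℝ) ^ (2 * n) * |(x : ℝ) - y|) *
          ((p : ℝ) ^ (-(2 * n)) * ‖(x : ℚ_[p]) - y‖) := by
          rw [mul_mul_mul_comm, ← zpow_add₀ hp.ne', add_neg_cancel, zpow_zero, one_mul]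
      _ ≤ _ := by
          rw [sq]
          exact mul_le_mul (le_max_left _ _) (le_max_right _ _) (by positivity)
            (le_max_of_le_left (by positivity))
  calc P = √P ^ 2 := (Real.sq_sqrt (by positivity)).symm
    _ ≤ _ := pow_le_pow_left₀ (Real.sqrt_nonneg P) hsqrt 2

theorem sub_eq_sub_of_lt_zpow_padicValRat_sub {φ : ℚ → ℚ} {K r : ℝ}
    (hR : ∀ x y : ℚ, |(φ x : ℝ) - φ y| ≤ K * |(x : ℝ) - y|)
    (hP : ∀ x y : ℚ, ‖(φ x : ℚ_[p]) - φ y‖ ≤ K * ‖(x : ℚ_[p]) - y‖)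
    {M : ℕ} (hM : 0 < M) (hMp : M.Coprime p) {a b c d : ℚ}
    (ha : (M : ℚ) * φ a ∈ ZOneOver p) (hb : (M : ℚ) * φ b ∈ ZOneOver p)
    (hc : (M : ℚ) * φ c ∈ ZOneOver p) (hd : (M : ℚ) * φ d ∈ ZOneOver p)
    (hpar : a - c = b - d) (hba : b ≠ a) (hca : c ≠ a)
    (hδ : deltaH p (diagQ p '' {a, c}) ≤ r)
    (hshape :
      4 * K ^ 2 * r ^ 2 * M < (p : ℝ) ^ (padicValRat p (b - a) - padicValRat p (c - a))) :
    φ a - φ c = φ b - φ d := by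
  by_contra hne
  set e := φ a - φ c - (φ b - φ d)
  have hlow : (M : ℝ)⁻¹ ≤ |(e : ℝ)| * ‖(e : ℚ_[p])‖ := by
    refine inv_le_abs_mul_norm_of_mul_mem_ZOneOver hM hMp (sub_ne_zero.mpr hne) ?_
    have : (M : ℚ) * e = M * φ a - M * φ c - (M * φ b - M * φ d) := by ring
    rw [this]
    exact sub_mem (sub_mem ha hc) (sub_mem hb hd)
  have hreal : |(e : ℝ)| ≤ 2 * K * |(a : ℝ) - c| := by
    have := norm_sub_sub_sub_le_of_norm_sub_le (f := fun x => (φ x : ℝ)) (g := ((↑) : ℚ → ℝ))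
      (by simpa only [Real.norm_eq_abs] using hR) (a := a) (b := b) (c := c) (d := d)
      (by rw [← Rat.cast_sub, ← Rat.cast_sub, hpar])
    simpa only [Real.norm_eq_abs, e, Rat.cast_sub] using this
  have hpadic : ‖(e : ℚ_[p])‖ ≤ 2 * K * ‖(a : ℚ_[p]) - b‖ := by
    have := norm_sub_sub_sub_le_of_norm_sub_le (f := fun x => (φ x : ℚ_[p]))
      (g := ((↑) : ℚ → ℚ_[p])) hP (a := a) (b := c) (c := b) (d := d)
      (by rw [← Rat.cast_sub, ← Rat.cast_sub, sub_eq_sub_iff_sub_eq_sub.mp hpar])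
    have he : (e : ℚ_[p]) = (φ a : ℚ_[p]) - φ b - (φ c - φ d) := by
      simp only [e]
      push_cast
      abel
    rwa [he]
  have hside := mul_norm_sub_lt_norm_sub_of_lt_zpow hba hca hshape
  have hac : 0 < |(a : ℝ) - c| := abs_pos.mpr (by exact_mod_cast sub_ne_zero.mpr hca.symm)
  have hpair : |(a : ℝ) - c| * ‖(a : ℚ_[p]) - c‖ ≤ r ^ 2 :=
    (abs_sub_mul_norm_sub_le_deltaH_sq a c).trans
      (pow_le_pow_left₀ (deltaH_nonneg _) hδ 2)
  have hprod : 1 ≤ M * (4 * K ^ 2 * (|(a : ℝ) - c| * ‖(a : ℚ_[p]) - b‖)) := by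
    refine (inv_le_iff_one_le_mul₀' (Nat.cast_pos.mpr hM)).mp (hlow.trans ?_)
    calc |(e : ℝ)| * ‖(e : ℚ_[p])‖ ≤ (2 * K * |(a : ℝ) - c|) * (2 * K * ‖(a : ℚ_[p]) - b‖) :=
          mul_le_mul hreal hpadic (norm_nonneg _) ((abs_nonneg _).trans hreal)
      _ = _ := by ring
  refine lt_irrefl (r ^ 2) ?_
  calc r ^ 2 ≤ r ^ 2 * (M * (4 * K ^ 2 * (|(a : ℝ) - c| * ‖(a : ℚ_[p]) - b‖))) :=
        le_mul_of_one_le_right (sq_nonneg r) hprod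
    _ = |(a : ℝ) - c| * (4 * K ^ 2 * r ^ 2 * M * ‖(a : ℚ_[p]) - b‖) := by ring
    _ < |(a : ℝ) - c| * ‖(a : ℚ_[p]) - c‖ := mul_lt_mul_of_pos_left hside hac
    _ ≤ r ^ 2 := hpair

end

theorem parallelogram_lemma_general (p : ℕ) [Fact p.Prime] (φ : ℚ → ℚ) (K₀ : ℝ)
    (hlipR : ∀ x y : ℚ,
      K₀⁻¹ * |(x : ℝ) - (y : ℝ)| ≤ |(φ x : ℝ) - (φ y : ℝ)| ∧
      |(φ x : ℝ) - (φ y : ℝ)| ≤ K₀ * |(x : ℝ) - (y : ℝ)|)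
    (hlipP : ∀ x y : ℚ,
      K₀⁻¹ * ‖(x : ℚ_[p]) - (y : ℚ_[p])‖ ≤ ‖(φ x : ℚ_[p]) - (φ y : ℚ_[p])‖ ∧
      ‖(φ x : ℚ_[p]) - (φ y : ℚ_[p])‖ ≤ K₀ * ‖(x : ℚ_[p]) - (y : ℚ_[p])‖)
    (hqc : QuasiCompatible p φ)
    (L : ℕ) (hL : 0 < L) (hLp : Nat.Coprime L p) :
    ∃ s₀ : ℕ, 0 < s₀ ∧ ∀ a b c d : ℚ,
      (L : ℚ) * a ∈ ZOneOver p → (L : ℚ) * b ∈ ZOneOver p →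
      (L : ℚ) * c ∈ ZOneOver p → (L : ℚ) * d ∈ ZOneOver p →
      a - c = b - d → b ≠ a → c ≠ a →
      deltaH p (diagQ p '' {a, b}) + deltaH p (diagQ p '' {a, c}) ≤ (L : ℝ) →
      (s₀ : ℤ) < |padicValRat p (b - a) - padicValRat p (c - a)| →
      φ a - φ c = φ b - φ d := by
  obtain ⟨M, hM, hMp, hφM⟩ := hqc.1 {x | (L : ℚ) * x ∈ ZOneOver p} ⟨L, hL, hLp, fun _ hx => hx⟩
  have hφ (x : ℚ) (hx : (L : ℚ) * x ∈ ZOneOver p) : (M : ℚ) * φ x ∈ ZOneOver p :=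
    hφM _ ⟨x, hx, rfl⟩
  have hp : (1 : ℝ) ≤ p := Nat.one_le_cast.mpr (Fact.out : p.Prime).one_le
  obtain ⟨N, hN⟩ := pow_unbounded_of_one_lt (4 * K₀ ^ 2 * (L : ℝ) ^ 2 * M)
    (Nat.one_lt_cast.mpr (Fact.out : p.Prime).one_lt)
  have hpow (v : ℤ) (hv : (N : ℤ) < v) : 4 * K₀ ^ 2 * (L : ℝ) ^ 2 * M < (p : ℝ) ^ v :=
    hN.trans_le (by rw [← zpow_natCast]; exact zpow_le_zpow_right₀ hp hv.le)
  refine ⟨N + 1, N.succ_pos, fun a b c d ha hb hc hd hpar hba hca hper hshape => ?_⟩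
  have hR x y := (hlipR x y).2
  have hP x y := (hlipP x y).2
  have hδab := deltaH_nonneg (p := p) (diagQ p '' {a, b})
  have hδac := deltaH_nonneg (p := p) (diagQ p '' {a, c})
  rcases lt_abs.mp hshape with h | h
  · exact sub_eq_sub_of_lt_zpow_padicValRat_sub hR hP hM hMp (hφ a ha) (hφ b hb) (hφ c hc)
      (hφ d hd) hpar hba hca (by linarith) (hpow _ (by push_cast at h; linarith))
  · have := sub_eq_sub_of_lt_zpow_padicValRat_sub hR hP hM hMp (hφ a ha) (hφ c hc) (hφ b hb)
      (hφ d hd) (by linear_combination hpar) hca hba (by linarith)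
      (hpow _ (by push_cast at h; linarith))
    linear_combination this

/-- **Parallelogram Lemma.** Let `φ : ℚ → ℚ` be a bijection with
`φ(0) = 0` which is `K₀`-bilipschitz for the real and `p`-adic absolute values and
quasicompatible with `H`. For every positive integer `L` coprime to `p` there is
`s₀ > 0` such that every parallelogram `(a,b,c,d)` in `(1/L)·ℤ[1/p]` with `b ≠ a`,
`c ≠ a`, `per(P) ≤ L` and `shape(P) > s₀` is mapped by `φ` to a parallelogram:
`φ(a) − φ(c) = φ(b) − φ(d)`. -/
theorem parallelogram_lemma (p : ℕ) [Fact p.Prime] (φ : ℚ → ℚ)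
    (hbij : Function.Bijective φ) (h0 : φ 0 = 0) (K₀ : ℝ) (hK₀ : 1 ≤ K₀)
    (hlipR : ∀ x y : ℚ,
      K₀⁻¹ * |(x : ℝ) - (y : ℝ)| ≤ |(φ x : ℝ) - (φ y : ℝ)| ∧
      |(φ x : ℝ) - (φ y : ℝ)| ≤ K₀ * |(x : ℝ) - (y : ℝ)|)
    (hlipP : ∀ x y : ℚ,
      K₀⁻¹ * ‖(x : ℚ_[p]) - (y : ℚ_[p])‖ ≤ ‖(φ x : ℚ_[p]) - (φ y : ℚ_[p])‖ ∧
      ‖(φ x : ℚ_[p]) - (φ y : ℚ_[p])‖ ≤ K₀ * ‖(x : ℚ_[p]) - (y : ℚ_[p])‖)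
    (hqc : QuasiCompatible p φ)
    (L : ℕ) (hL : 0 < L) (hLp : Nat.Coprime L p) :
    ∃ s₀ : ℕ, 0 < s₀ ∧ ∀ a b c d : ℚ,
      (L : ℚ) * a ∈ ZOneOver p → (L : ℚ) * b ∈ ZOneOver p →
      (L : ℚ) * c ∈ ZOneOver p → (L : ℚ) * d ∈ ZOneOver p →
      a - c = b - d → b ≠ a → c ≠ a →
      deltaH p (diagQ p '' {a, b}) + deltaH p (diagQ p '' {a, c}) ≤ (L : ℝ) →
      (s₀ : ℤ) < |padicValRat p (b - a) - padicValRat p (c - a)| →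
      φ a - φ c = φ b - φ d :=
  parallelogram_lemma_general p φ K₀ hlipR hlipP hqc L hL hLp
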